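/- arXiv:2009.00113 — 3 statements merged into one kernel-verified Lean document; each statement's English description precedes it below -/
import Mathlib

section
/- (Cauchy formula for repeated integration.) Let a < x be real numbers, n ≥ 1 an integer, and f : ℝ → ℝ continuous on [a,x]. Then the n-fold iterated integral ∫_a^x ∫_a^{u_1} ⋯ ∫_a^{u_{n−1}} f(u_n) du_n ⋯ du_2 du_1 equals (1/(n−1)!) · ∫_a^x (x−t)^{n−1} f(t) dt. -/
open MeasureTheory

/-- `repInt a f n` is the `n`-th repeated antiderivative of `f` based at `a`:
`repInt a f 0 = f` and `repInt a f (n+1) x = ∫_a^x repInt a f n t dt`. -/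
noncomputable def repInt (a : ℝ) (f : ℝ → ℝ) : ℕ → ℝ → ℝ
  | 0 => f
  | (n + 1) => fun x => ∫ t in a..x, repInt a f n t

/-- The weighted primitive `y ↦ ∫_a^y (y-t)^m f t dt`. -/
noncomputable def phiI (a : ℝ) (g : ℝ → ℝ) (m : ℕ) (y : ℝ) : ℝ :=
  ∫ t in a..y, (y - t) ^ m * g t

/-- Binomial expansion of `phiI`. -/
noncomputable def PhiI (a : ℝ) (g : ℝ → ℝ) (m : ℕ) (y : ℝ) : ℝ :=
  ∑ k ∈ Finset.range (m + 1),
    (m.choose k : ℝ) * y ^ k * ∫ t in a..y, (-t) ^ (m - k) * g t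

lemma phi_eq_Phi {g : ℝ → ℝ} (hg : Continuous g) (a : ℝ) (m : ℕ) (y : ℝ) :
    phiI a g m y = PhiI a g m y := by
  unfold phiI PhiI
  have key : ∀ t : ℝ, (y - t) ^ m * g t
      = ∑ k ∈ Finset.range (m + 1),
          (m.choose k : ℝ) * y ^ k * ((-t) ^ (m - k) * g t) := by
    intro t
    rw [sub_eq_add_neg, add_pow, Finset.sum_mul]
    exact Finset.sum_congr rfl fun k _ => by ring
  simp_rw [key]
  rw [intervalIntegral.integral_finset_sum]
  · exact Finset.sum_congr rfl fun k _ => by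
      rw [intervalIntegral.integral_const_mul]
  · intro k _
    exact (continuous_const.mul ((continuous_neg.pow _).mul hg)).intervalIntegrable _ _

lemma Phi_hasDerivAt {g : ℝ → ℝ} (hg : Continuous g) (a : ℝ) (m : ℕ) (y : ℝ) :
    HasDerivAt (PhiI a g (m + 1)) ((m + 1) * PhiI a g m y) y := by
  have hψ : ∀ j : ℕ, HasDerivAt (fun y => ∫ t in a..y, (-t) ^ j * g t)
      ((-y) ^ j * g y) y := fun j =>
    (((continuous_neg.pow j).mul hg).integral_hasStrictDerivAt a y).hasDerivAt
  have hterm : ∀ k ∈ Finset.range (m + 2),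
      HasDerivAt (fun y => ((m + 1).choose k : ℝ) * y ^ k * ∫ t in a..y, (-t) ^ (m + 1 - k) * g t)
        (((m + 1).choose k : ℝ) * ((k : ℝ) * y ^ (k - 1)) * (∫ t in a..y, (-t) ^ (m + 1 - k) * g t)
          + ((m + 1).choose k : ℝ) * y ^ k * ((-y) ^ (m + 1 - k) * g y)) y := by
    intro k _
    have h1 : HasDerivAt (fun y : ℝ => ((m + 1).choose k : ℝ) * y ^ k)
        (((m + 1).choose k : ℝ) * ((k : ℝ) * y ^ (k - 1))) y :=
      (hasDerivAt_pow k y).const_mul _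
    exact h1.mul (hψ (m + 1 - k))
  have hsum := HasDerivAt.fun_sum hterm
  have : (fun y => ∑ k ∈ Finset.range (m + 2),
      ((m + 1).choose k : ℝ) * y ^ k * ∫ t in a..y, (-t) ^ (m + 1 - k) * g t)
      = PhiI a g (m + 1) := rfl
  rw [this] at hsum
  refine hsum.congr_deriv (Eq.symm ?_)
  rw [Finset.sum_add_distrib]
  have h2 : ∑ k ∈ Finset.range (m + 2),
      ((m + 1).choose k : ℝ) * y ^ k * ((-y) ^ (m + 1 - k) * g y) = 0 := by
    have : ∑ k ∈ Finset.range (m + 2),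
        ((m + 1).choose k : ℝ) * y ^ k * ((-y) ^ (m + 1 - k) * g y)
        = ((y + -y) ^ (m + 1)) * g y := by
      rw [add_pow, Finset.sum_mul]
      exact Finset.sum_congr rfl fun k _ => by ring
    rw [this]
    simp
  rw [h2, add_zero]
  rw [Finset.sum_range_succ']
  simp only [Nat.cast_zero, pow_zero, mul_one, zero_mul, mul_zero, add_zero]
  rw [PhiI, Finset.mul_sum]
  refine Finset.sum_congr rfl fun j hj => ?_
  have hchoose : ((m + 1).choose (j + 1) : ℝ) * (j + 1 : ℝ) = (m + 1 : ℝ) * (m.choose j : ℝ) := by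
    have := Nat.add_one_mul_choose_eq m j
    have : ((m + 1) * m.choose j : ℕ) = ((m + 1).choose (j + 1) * (j + 1) : ℕ) := this.symm ▸ rfl
    exact_mod_cast congrArg (Nat.cast (R := ℝ)) this |>.symm
  have hsub : m + 1 - (j + 1) = m - j := by omega
  rw [hsub]
  push_cast
  push_cast at hchoose
  symm
  calc ((m + 1).choose (j + 1) : ℝ) * (((j : ℝ) + 1) * y ^ (j + 1 - 1))
        * ∫ t in a..y, (-t) ^ (m - j) * g t
      = (((m + 1).choose (j + 1) : ℝ) * ((j : ℝ) + 1)) * y ^ j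
        * ∫ t in a..y, (-t) ^ (m - j) * g t := by
        simp only [Nat.add_sub_cancel]; ring
    _ = ((m : ℝ) + 1) * ((m.choose j : ℝ) * y ^ j * ∫ t in a..y, (-t) ^ (m - j) * g t) := by
        rw [hchoose]; ring

lemma Phi_continuous {g : ℝ → ℝ} (hg : Continuous g) (a : ℝ) (m : ℕ) :
    Continuous (PhiI a g m) := by
  unfold PhiI
  refine continuous_finset_sum _ fun k _ => ?_
  refine Continuous.mul (by fun_prop) ?_
  exact intervalIntegral.continuous_primitive
    (fun c d => ((continuous_neg.pow _).mul hg).intervalIntegrable c d) a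

lemma Phi_zero {g : ℝ → ℝ} (a : ℝ) (m : ℕ) : PhiI a g m a = 0 := by
  simp [PhiI]

lemma integral_phi {g : ℝ → ℝ} (hg : Continuous g) (a y : ℝ) (m : ℕ) :
    ∫ u in a..y, phiI a g m u = (1 / (m + 1 : ℝ)) * phiI a g (m + 1) y := by
  have hderiv : ∀ u ∈ Set.uIcc a y,
      HasDerivAt (PhiI a g (m + 1)) (((m : ℝ) + 1) * PhiI a g m u) u := by
    intro u _
    exact_mod_cast Phi_hasDerivAt hg a m u
  have hint : IntervalIntegrable (fun u => ((m : ℝ) + 1) * PhiI a g m u) volume a y :=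
    (continuous_const.mul (Phi_continuous hg a m)).intervalIntegrable _ _
  have key := intervalIntegral.integral_eq_sub_of_hasDerivAt hderiv hint
  rw [Phi_zero, sub_zero] at key
  rw [intervalIntegral.integral_const_mul] at key
  simp_rw [phi_eq_Phi hg]
  have hm : ((m : ℝ) + 1) ≠ 0 := by positivity
  field_simp
  linarith [key]

lemma repInt_eq {g : ℝ → ℝ} (hg : Continuous g) (a : ℝ) (m : ℕ) (y : ℝ) :
    repInt a g (m + 1) y = (1 / (Nat.factorial m : ℝ)) * phiI a g m y := by
  induction m generalizing y with
  | zero =>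
    simp only [repInt, phiI, Nat.factorial_zero, Nat.cast_one, pow_zero, one_mul, one_div, inv_one]
  | succ m ih =>
    have : repInt a g (m + 2) y = ∫ u in a..y, repInt a g (m + 1) u := rfl
    rw [this]
    have : (∫ u in a..y, repInt a g (m + 1) u)
        = ∫ u in a..y, (1 / (Nat.factorial m : ℝ)) * phiI a g m u := by
      apply intervalIntegral.integral_congr
      intro u _
      exact ih u
    rw [this, intervalIntegral.integral_const_mul, integral_phi hg]
    rw [Nat.factorial_succ]
    push_cast
    rw [← mul_assoc, div_mul_div_comm, one_mul, mul_comm (Nat.factorial m : ℝ)]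

lemma repInt_congr {f g : ℝ → ℝ} {a x : ℝ} (hax : a ≤ x) (h : Set.EqOn f g (Set.Icc a x)) :
    ∀ m, ∀ y ∈ Set.Icc a x, repInt a f (m + 1) y = repInt a g (m + 1) y := by
  intro m
  induction m with
  | zero =>
    intro y hy
    show (∫ t in a..y, f t) = ∫ t in a..y, g t
    apply intervalIntegral.integral_congr
    rw [Set.uIcc_of_le hy.1]
    exact h.mono (Set.Icc_subset_Icc_right hy.2)
  | succ m ih =>
    intro y hy
    show (∫ t in a..y, repInt a f (m + 1) t) = ∫ t in a..y, repInt a g (m + 1) t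
    apply intervalIntegral.integral_congr
    rw [Set.uIcc_of_le hy.1]
    intro t ht
    exact ih t ⟨ht.1, ht.2.trans hy.2⟩

/-- Cauchy formula for repeated integration: for `a < x`, `n ≥ 1` and `f` continuous
on `[a,x]`, the `n`-fold iterated integral of `f` equals
`(1/(n−1)!) ∫_a^x (x−t)^{n−1} f(t) dt`. -/
theorem cauchy_repeated_integration (a x : ℝ) (hax : a < x) (n : ℕ) (hn : 1 ≤ n)
    (f : ℝ → ℝ) (hf : ContinuousOn f (Set.Icc a x)) :
    repInt a f n x
      = (1 / (Nat.factorial (n - 1) : ℝ)) * ∫ t in a..x, (x - t) ^ (n - 1) * f t := by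
  obtain ⟨m, rfl⟩ : ∃ m, n = m + 1 := ⟨n - 1, (Nat.succ_pred_eq_of_pos hn).symm⟩
  set g : ℝ → ℝ := Set.IccExtend hax.le ((Set.Icc a x).restrict f) with hg_def
  have hg : Continuous g := Continuous.Icc_extend' hf.restrict
  have hEq : Set.EqOn f g (Set.Icc a x) := by
    intro y hy
    simp [hg_def, Set.IccExtend_of_mem hax.le _ hy]
    rfl
  have hx : x ∈ Set.Icc a x := ⟨hax.le, le_rfl⟩
  rw [repInt_congr hax.le hEq m x hx, repInt_eq hg]
  have : (∫ t in a..x, (x - t) ^ (m + 1 - 1) * f t)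
      = ∫ t in a..x, (x - t) ^ m * g t := by
    apply intervalIntegral.integral_congr
    rw [Set.uIcc_of_le hax.le]
    intro t ht
    simp [hEq ht]
  rw [this]
  simp [phiI]
end

section
/- Let L ≥ 1 be an integer and A ≥ 0 a real number, and let S_L(A) = ∫_{[0,1]^L} exp(A · min(u_1, …, u_L)) du. Then 1 ≤ S_L(A) ≤ 1 + A·e^A/(L+1). -/
open MeasureTheory

variable {L : ℕ}

lemma cont_min (hL : 1 ≤ L) : Continuous fun u : Fin L → ℝ => ⨅ i, u i := by
  haveI : Nonempty (Fin L) := ⟨⟨0, hL⟩⟩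
  have : (fun u : Fin L → ℝ => ⨅ i, u i)
      = fun u => Finset.univ.inf' Finset.univ_nonempty (fun i => u i) := by
    funext u; rw [Finset.inf'_univ_eq_ciInf]
  rw [this]
  exact Continuous.finset_inf'_apply _ fun i _ => continuous_apply i

lemma cube_meas : MeasurableSet (Set.univ.pi fun _ : Fin L => Set.Icc (0:ℝ) 1) :=
  MeasurableSet.univ_pi fun _ => measurableSet_Icc

lemma cube_compact : IsCompact (Set.univ.pi fun _ : Fin L => Set.Icc (0:ℝ) 1) :=
  isCompact_univ_pi fun _ => isCompact_Icc

lemma cube_vol : volume (Set.univ.pi fun _ : Fin L => Set.Icc (0:ℝ) 1) = 1 := by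
  rw [volume_pi_pi]; simp

lemma min_mem (hL : 1 ≤ L) {u : Fin L → ℝ}
    (hu : u ∈ Set.univ.pi fun _ : Fin L => Set.Icc (0:ℝ) 1) :
    (⨅ i, u i) ∈ Set.Icc (0:ℝ) 1 := by
  haveI : Nonempty (Fin L) := ⟨⟨0, hL⟩⟩
  constructor
  · exact le_ciInf fun i => (hu i trivial).1
  · exact le_trans (ciInf_le (Set.Finite.bddBelow (Set.finite_range u)) ⟨0, hL⟩)
      (hu ⟨0, hL⟩ trivial).2

lemma integral_min (hL : 1 ≤ L) :
    ∫ u in Set.univ.pi fun _ : Fin L => Set.Icc (0:ℝ) 1, (⨅ i, u i) = 1 / (L + 1) := by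
  haveI : Nonempty (Fin L) := ⟨⟨0, hL⟩⟩
  set cube := Set.univ.pi fun _ : Fin L => Set.Icc (0:ℝ) 1 with hcube
  have hint : IntegrableOn (fun u : Fin L → ℝ => ⨅ i, u i) cube :=
    (cont_min hL).continuousOn.integrableOn_compact cube_compact
  have hnn : 0 ≤ᵐ[volume.restrict cube] fun u : Fin L → ℝ => ⨅ i, u i := by
    filter_upwards [ae_restrict_mem cube_meas] with u hu
    exact (min_mem hL hu).1
  rw [show (∫ u in cube, (⨅ i, u i)) = ∫ u, (⨅ i, u i) ∂(volume.restrict cube) from rfl,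
    Integrable.integral_eq_integral_meas_lt hint hnn]
  have hmeas : ∀ t : ℝ, 0 < t →
      (volume.restrict cube) {a : Fin L → ℝ | t < ⨅ i, a i}
        = ENNReal.ofReal (1 - t) ^ L := by
    intro t ht
    have hS : MeasurableSet {a : Fin L → ℝ | t < ⨅ i, a i} :=
      measurableSet_lt measurable_const (cont_min hL).measurable
    rw [Measure.restrict_apply hS]
    have : {a : Fin L → ℝ | t < ⨅ i, a i} ∩ cube
        = Set.univ.pi fun _ : Fin L => Set.Ioc t 1 := by
      ext a
      simp only [Set.mem_inter_iff, Set.mem_setOf_eq, hcube, Set.mem_pi, Set.mem_univ,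
        Set.mem_Icc, Set.mem_Ioc, forall_true_left, ← Finset.inf'_univ_eq_ciInf,
        Finset.lt_inf'_iff, Finset.mem_univ, forall_true_left, true_implies]
      constructor
      · rintro ⟨h1, h2⟩ i; exact ⟨h1 i, (h2 i).2⟩
      · intro h; exact ⟨fun i => (h i).1, fun i => ⟨le_of_lt (ht.trans (h i).1), (h i).2⟩⟩
    rw [this, volume_pi_pi]
    simp [Real.volume_Ioc]
  have : ∫ t in Set.Ioi (0:ℝ),
      ENNReal.toReal ((volume.restrict cube) {a : Fin L → ℝ | t < ⨅ i, a i})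
      = ∫ t in Set.Ioi (0:ℝ), Set.indicator (Set.Iic (1:ℝ)) (fun t => (1 - t) ^ L) t := by
    apply setIntegral_congr_fun measurableSet_Ioi
    intro t ht
    simp only [hmeas t ht]
    by_cases h1 : t ≤ 1
    · rw [Set.indicator_of_mem (Set.mem_Iic.mpr h1)]
      rw [ENNReal.toReal_pow, ENNReal.toReal_ofReal (by linarith)]
    · rw [Set.indicator_of_notMem (fun h => h1 (Set.mem_Iic.mp h))]
      push_neg at h1
      rw [ENNReal.ofReal_eq_zero.mpr (by linarith)]
      simp; omega
  simp only [measureReal_def]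
  rw [this, setIntegral_indicator measurableSet_Iic]
  have : Set.Ioi (0:ℝ) ∩ Set.Iic 1 = Set.Ioc 0 1 := by ext x; simp [Set.mem_Ioc]
  rw [this, ← intervalIntegral.integral_of_le (by norm_num : (0:ℝ) ≤ 1)]
  have := intervalIntegral.integral_comp_sub_left (a := 0) (b := 1) (fun x : ℝ => x ^ L) 1
  simp only [sub_zero, sub_self] at this
  rw [this, integral_pow]
  simp

/-- `cubeMinExp L A = ∫_{[0,1]^L} exp(A · min(u_1, …, u_L)) du`. -/
noncomputable def cubeMinExp (L : ℕ) (A : ℝ) : ℝ :=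
  ∫ u in Set.univ.pi (fun _ : Fin L => Set.Icc (0:ℝ) 1), Real.exp (A * ⨅ i, u i)

lemma exp_le_aux {x A : ℝ} (hx : 0 ≤ x) (hxA : x ≤ A) :
    Real.exp x ≤ 1 + x * Real.exp A := by
  have h1 : -x + 1 ≤ Real.exp (-x) := Real.add_one_le_exp (-x)
  rw [Real.exp_neg] at h1
  have h2 : (0:ℝ) < Real.exp x := Real.exp_pos x
  have h3 : Real.exp x ≤ 1 + x * Real.exp x := by
    have := mul_le_mul_of_nonneg_right h1 h2.le
    rw [inv_mul_cancel₀ h2.ne'] at this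
    nlinarith
  have h4 : x * Real.exp x ≤ x * Real.exp A :=
    mul_le_mul_of_nonneg_left (Real.exp_le_exp.mpr hxA) hx
  linarith

/-- For `L ≥ 1` and `A ≥ 0`, `1 ≤ S_L(A) ≤ 1 + A·e^A/(L+1)`. -/
theorem cubeMinExp_bounds (L : ℕ) (hL : 1 ≤ L) (A : ℝ) (hA : 0 ≤ A) :
    1 ≤ cubeMinExp L A ∧ cubeMinExp L A ≤ 1 + A * Real.exp A / (L + 1) := by
  haveI : Nonempty (Fin L) := ⟨⟨0, hL⟩⟩
  set cube := Set.univ.pi fun _ : Fin L => Set.Icc (0:ℝ) 1 with hcube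
  have hexp_int : IntegrableOn (fun u : Fin L → ℝ => Real.exp (A * ⨅ i, u i)) cube :=
    ((Real.continuous_exp.comp (continuous_const.mul (cont_min hL))).continuousOn).integrableOn_compact
      cube_compact
  have hmin_int : IntegrableOn (fun u : Fin L → ℝ => ⨅ i, u i) cube :=
    (cont_min hL).continuousOn.integrableOn_compact cube_compact
  have hvol : volume cube = 1 := cube_vol
  constructor
  · have h1 : (1:ℝ) * (volume cube).toReal
        ≤ ∫ u in cube, Real.exp (A * ⨅ i, u i) := by
      apply setIntegral_ge_of_const_le_real cube_meas (by rw [hvol]; exact ENNReal.one_ne_top)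
        (fun u hu => Real.one_le_exp (mul_nonneg hA (min_mem hL hu).1)) hexp_int
    rw [hvol] at h1
    simpa [cubeMinExp, hcube] using h1
  · have hpt : ∀ u ∈ cube, Real.exp (A * ⨅ i, u i)
        ≤ 1 + (A * Real.exp A) * (⨅ i, u i) := by
      intro u hu
      obtain ⟨hm0, hm1⟩ := min_mem hL hu
      calc Real.exp (A * ⨅ i, u i) ≤ 1 + (A * ⨅ i, u i) * Real.exp A :=
            exp_le_aux (mul_nonneg hA hm0)
              (by nlinarith)
        _ = 1 + (A * Real.exp A) * (⨅ i, u i) := by ring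
    have hrhs_int : IntegrableOn
        (fun u : Fin L → ℝ => 1 + (A * Real.exp A) * (⨅ i, u i)) cube := by
      apply Integrable.add ((integrableOn_const_iff (C := (1:ℝ))).mpr (Or.inr (by rw [hvol]; exact ENNReal.one_lt_top)))
      exact hmin_int.const_mul _
    have h2 := setIntegral_mono_on hexp_int hrhs_int cube_meas hpt
    have h3 : ∫ u in cube, (1 + (A * Real.exp A) * (⨅ i, u i))
        = 1 + A * Real.exp A / (L + 1) := by
      rw [integral_add ((integrableOn_const_iff (C := (1:ℝ))).mpr (Or.inr (by rw [hvol]; exact ENNReal.one_lt_top)))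
        (hmin_int.const_mul _), MeasureTheory.integral_const_mul, setIntegral_const, integral_min hL, measureReal_def, hvol]
      simp [mul_one_div, div_eq_mul_inv]
    calc cubeMinExp L A ≤ _ := h2
      _ = 1 + A * Real.exp A / (L + 1) := h3
end

section
/- Let n ≥ 1 be an integer, S₁ and S₂ nonempty subsets of {1, …, n} with |S₁| = L₁ and |S₂| = L₂, and a, b real numbers. Then ∫_{[0,1]^n} exp(a · min_{i ∈ S₁} u_i + b · min_{i ∈ S₂} u_i) du ≤ √(S_{L₁}(2a) · S_{L₂}(2b)), where S_L(A) = ∫_{[0,1]^L} exp(A · min(v_1, …, v_L)) dv. -/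
open MeasureTheory

/-- The uniform measure on `[0,1]`. -/
noncomputable def unifI : Measure ℝ := volume.restrict (Set.Icc (0:ℝ) 1)

instance : IsProbabilityMeasure unifI :=
  ⟨by simp [unifI, Real.volume_Icc]⟩

lemma cube_restrict (ι : Type*) [Fintype ι] :
    (volume : Measure (ι → ℝ)).restrict (Set.univ.pi fun _ => Set.Icc (0:ℝ) 1)
      = Measure.pi fun _ : ι => unifI := by
  refine (Measure.pi_eq (μ := fun _ : ι => unifI) fun s hs => ?_).symm
  rw [Measure.restrict_apply (MeasurableSet.univ_pi hs), ← Set.pi_inter_distrib,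
    volume_pi_pi]
  exact Finset.prod_congr rfl fun i _ => (Measure.restrict_apply (hs i)).symm

lemma inf'_eq_iInf_subtype {ι : Type*} (S : Finset ι) (h : S.Nonempty) (f : ι → ℝ) :
    S.inf' h f = ⨅ i : {x // x ∈ S}, f i := by
  rw [Finset.inf'_eq_csInf_image, iInf]
  congr 1
  ext x
  simp [Set.range, Set.mem_image]

lemma ciInf_comp_equiv {ι ι' : Type*} [Nonempty ι] (e : ι ≃ ι') (f : ι' → ℝ) :
    ⨅ i, f (e i) = ⨅ j, f j := by
  have : Nonempty ι' := Nonempty.map e ‹_›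
  rw [iInf, iInf]
  congr 1
  exact e.surjective.range_comp f

lemma cont_ciInf {ι : Type*} [Fintype ι] [Nonempty ι] :
    Continuous fun x : ι → ℝ => ⨅ i, x i := by
  have h : (fun x : ι → ℝ => ⨅ i, x i)
      = fun x => Finset.univ.inf' Finset.univ_nonempty (fun i => x i) := by
    ext x; rw [Finset.inf'_univ_eq_ciInf]
  rw [h]
  exact Continuous.finset_inf'_apply _ fun i _ => continuous_apply i

lemma marginal_eq (n : ℕ) (S : Finset (Fin n)) (h : S.Nonempty) (L : ℕ)
    (hc : S.card = L) (A : ℝ) :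
    ∫ u, Real.exp (A * S.inf' h u) ∂(Measure.pi fun _ : Fin n => unifI)
      = ∫ w, Real.exp (A * ⨅ j, w j) ∂(Measure.pi fun _ : Fin L => unifI) := by
  classical
  letI instS : Fintype {x // x ∈ S} := Subtype.fintype fun i => i ∈ S
  have hS : Nonempty {x // x ∈ S} := h.to_subtype
  have hL : 0 < L := hc ▸ Finset.card_pos.mpr h
  have hFL : Nonempty (Fin L) := Fin.pos_iff_nonempty.mp hL
  have e : Fin L ≃ {x // x ∈ S} :=
    (Fintype.equivFinOfCardEq ((Fintype.card_congr (Equiv.refl _)).trans (by rw [Fintype.card_coe, hc]))).symm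
  set G : ({x // x ∈ S} → ℝ) → ℝ := fun x => Real.exp (A * ⨅ i, x i) with hG
  have hGcont : Continuous G :=
    Real.continuous_exp.comp (continuous_const.mul cont_ciInf)
  have MP1 := measurePreserving_piEquivPiSubtypeProd (fun _ : Fin n => unifI) (fun i => i ∈ S)
  have MP2 := measurePreserving_piCongrLeft (fun _ : {x // x ∈ S} => unifI) e
  have h2 : ∫ x, G x ∂(Measure.map Prod.fst
        ((Measure.pi fun _ : {x // x ∈ S} => unifI).prod
          (Measure.pi fun _ : {x // ¬ x ∈ S} => unifI)))
      = ∫ z, G z.1 ∂((Measure.pi fun _ : {x // x ∈ S} => unifI).prod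
          (Measure.pi fun _ : {x // ¬ x ∈ S} => unifI)) :=
    integral_map measurable_fst.aemeasurable hGcont.aestronglyMeasurable
  have hmap : Measure.map Prod.fst
        ((Measure.pi fun _ : {x // x ∈ S} => unifI).prod
          (Measure.pi fun _ : {x // ¬ x ∈ S} => unifI))
      = Measure.pi fun _ : {x // x ∈ S} => unifI := by
    rw [Measure.map_fst_prod]; simp
  calc ∫ u, Real.exp (A * S.inf' h u) ∂(Measure.pi fun _ : Fin n => unifI)
      = ∫ u, G (((MeasurableEquiv.piEquivPiSubtypeProd (fun _ : Fin n => ℝ) (fun i => i ∈ S)) u).1)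
          ∂(Measure.pi fun _ : Fin n => unifI) := by
        congr 1
        ext u
        simp only [hG, MeasurableEquiv.piEquivPiSubtypeProd,
          Equiv.piEquivPiSubtypeProd, MeasurableEquiv.coe_mk, Equiv.coe_fn_mk]
        rw [inf'_eq_iInf_subtype S h u]
    _ = ∫ z, G z.1 ∂((Measure.pi fun _ : {x // x ∈ S} => unifI).prod
          (Measure.pi fun _ : {x // ¬ x ∈ S} => unifI)) :=
        MP1.integral_comp' (fun z => G z.1)
    _ = ∫ x, G x ∂(Measure.pi fun _ : {x // x ∈ S} => unifI) := by
        rw [← h2, hmap]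
    _ = ∫ w, G ((MeasurableEquiv.piCongrLeft (fun _ => ℝ) e) w)
          ∂(Measure.pi fun _ : Fin L => unifI) := (MP2.integral_comp' G).symm
    _ = ∫ w, Real.exp (A * ⨅ j, w j) ∂(Measure.pi fun _ : Fin L => unifI) := by
        congr 1
        ext w
        have happ : ∀ i : {x // x ∈ S},
            (MeasurableEquiv.piCongrLeft (fun _ => ℝ) e) w i = w (e.symm i) := by
          intro i
          rw [MeasurableEquiv.coe_piCongrLeft]
          conv_lhs => rw [← e.apply_symm_apply i]
          rw [Equiv.piCongrLeft_apply_apply]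
        simp only [hG, happ]
        rw [ciInf_comp_equiv e.symm w]


lemma cont_inf' {n : ℕ} (S : Finset (Fin n)) (h : S.Nonempty) :
    Continuous fun u : Fin n → ℝ => S.inf' h u :=
  Continuous.finset_inf'_apply h fun i _ => continuous_apply i

lemma memLp_exp_inf' {n : ℕ} (S : Finset (Fin n)) (h : S.Nonempty) (a : ℝ) (p : ENNReal) :
    MemLp (fun u => Real.exp (a * S.inf' h u)) p (Measure.pi fun _ : Fin n => unifI) := by
  have hcont : Continuous fun u : Fin n → ℝ => Real.exp (a * S.inf' h u) :=
    Real.continuous_exp.comp (continuous_const.mul (cont_inf' S h))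
  refine MemLp.of_bound hcont.aestronglyMeasurable (Real.exp |a|) ?_
  have hmeas : MeasurableSet (Set.univ.pi fun _ : Fin n => Set.Icc (0:ℝ) 1) :=
    MeasurableSet.univ_pi fun _ => measurableSet_Icc
  have hae : ∀ᵐ u ∂(Measure.pi fun _ : Fin n => unifI),
      u ∈ Set.univ.pi fun _ : Fin n => Set.Icc (0:ℝ) 1 := by
    rw [← cube_restrict (Fin n)]
    exact ae_restrict_mem hmeas
  filter_upwards [hae] with u hu
  obtain ⟨i, hi, hieq⟩ := S.exists_mem_eq_inf' h u
  have hui : u i ∈ Set.Icc (0:ℝ) 1 := hu i trivial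
  rw [Real.norm_of_nonneg (Real.exp_pos _).le]
  apply Real.exp_le_exp.2
  calc a * S.inf' h u ≤ |a * S.inf' h u| := le_abs_self _
    _ = |a| * |S.inf' h u| := abs_mul _ _
    _ ≤ |a| * 1 := by
        apply mul_le_mul_of_nonneg_left _ (abs_nonneg a)
        rw [hieq, abs_le]
        exact ⟨by linarith [hui.1], hui.2⟩
    _ = |a| := mul_one _

lemma exp_rpow_two (t : ℝ) : Real.exp t ^ (2:ℝ) = Real.exp (2 * t) := by
  rw [Real.rpow_def_of_pos (Real.exp_pos t), Real.log_exp, mul_comm]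

lemma cubeMinExp_nonneg (L : ℕ) (A : ℝ) : 0 ≤ cubeMinExp L A :=
  integral_nonneg fun u => (Real.exp_pos _).le

lemma sq_integral_eq {n : ℕ} (S : Finset (Fin n)) (h : S.Nonempty) (L : ℕ)
    (hc : S.card = L) (a : ℝ) :
    ∫ u, Real.exp (a * S.inf' h u) ^ (2:ℝ) ∂(Measure.pi fun _ : Fin n => unifI)
      = cubeMinExp L (2 * a) := by
  unfold cubeMinExp
  rw [cube_restrict (Fin L), ← marginal_eq n S h L hc (2*a)]
  congr 1
  ext u
  rw [exp_rpow_two, mul_assoc]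

/-- Two-cycle cut: for nonempty `S₁, S₂ ⊆ {1,…,n}` with `|S₁| = L₁`, `|S₂| = L₂`,
`∫_{[0,1]^n} exp(a·min_{S₁} u + b·min_{S₂} u) du ≤ √(S_{L₁}(2a) · S_{L₂}(2b))`. -/
theorem two_cycle_cut (n : ℕ) (hn : 1 ≤ n) (S₁ S₂ : Finset (Fin n))
    (h₁ : S₁.Nonempty) (h₂ : S₂.Nonempty) (L₁ L₂ : ℕ)
    (hc₁ : S₁.card = L₁) (hc₂ : S₂.card = L₂) (a b : ℝ) :
    (∫ u in Set.univ.pi (fun _ : Fin n => Set.Icc (0:ℝ) 1),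
        Real.exp (a * S₁.inf' h₁ u + b * S₂.inf' h₂ u))
      ≤ Real.sqrt (cubeMinExp L₁ (2 * a) * cubeMinExp L₂ (2 * b)) := by
  have hpq : Real.HolderConjugate 2 2 := Real.HolderConjugate.two_two
  set μn := Measure.pi fun _ : Fin n => unifI with hμn
  have hCS := integral_mul_le_Lp_mul_Lq_of_nonneg (μ := μn) hpq
    (f := fun u => Real.exp (a * S₁.inf' h₁ u))
    (g := fun u => Real.exp (b * S₂.inf' h₂ u))
    (Filter.Eventually.of_forall fun u => (Real.exp_pos _).le)
    (Filter.Eventually.of_forall fun u => (Real.exp_pos _).le)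
    (by simpa using memLp_exp_inf' S₁ h₁ a (ENNReal.ofReal 2))
    (by simpa using memLp_exp_inf' S₂ h₂ b (ENNReal.ofReal 2))
  rw [sq_integral_eq S₁ h₁ L₁ hc₁ a, sq_integral_eq S₂ h₂ L₂ hc₂ b] at hCS
  calc (∫ u in Set.univ.pi (fun _ : Fin n => Set.Icc (0:ℝ) 1),
        Real.exp (a * S₁.inf' h₁ u + b * S₂.inf' h₂ u))
      = ∫ u, Real.exp (a * S₁.inf' h₁ u) * Real.exp (b * S₂.inf' h₂ u) ∂μn := by
        rw [cube_restrict (Fin n)]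
        congr 1
        ext u
        rw [Real.exp_add]
    _ ≤ cubeMinExp L₁ (2 * a) ^ ((1:ℝ)/2) * cubeMinExp L₂ (2 * b) ^ ((1:ℝ)/2) := hCS
    _ = Real.sqrt (cubeMinExp L₁ (2 * a) * cubeMinExp L₂ (2 * b)) := by
        rw [← Real.sqrt_eq_rpow, ← Real.sqrt_eq_rpow,
          ← Real.sqrt_mul (cubeMinExp_nonneg L₁ (2*a))]
end
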